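/- For n ≥ 3 and m ≥ 2, no 2-element set of vertices is a resolving set for the graph (Pₙ × Pₘ) ⊙ K₁; hence dim((Pₙ × Pₘ) ⊙ K₁) ≥ 3. -/

import Mathlib

/-!
In `G ⊙ K₁` the distance from `inl w` to a landmark `s` is `d_G(w, base s)`, plus one if `s` is a
pendant, and a pendant `inr u` is one farther than `inl u` from every landmark other than itself.
Hence two landmarks with base points `a, b` fail to resolve `G ⊙ K₁` as soon as `G` has twins
`u ≠ v` with respect to `a, b`, or a vertex `u ∉ {a, b}` together with a vertex `v` one step
farther than `u` from both. In the grid, whose distance is the L¹ distance, such a pair always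
exists: for landmarks in different rows and columns a diagonal step next to `a` gives twins; for
landmarks in one row, step along a column missing both away from them; for landmarks in one
column, reflect about it or step along a row away from it. Since supersets of resolving sets
resolve, `dim ≥ 3` follows.
-/

open SimpleGraph

/-- Corona `G ⊙ K₁`: attach to each vertex `v` (as `Sum.inl v`) a pendant vertex `Sum.inr v`. -/
def corona {V : Type*} (G : SimpleGraph V) : SimpleGraph (V ⊕ V) :=
  SimpleGraph.fromRel (fun a b =>
    match a, b with
    | Sum.inl x, Sum.inl y => G.Adj x y
    | Sum.inl x, Sum.inr y => x = y
    | _, _ => False)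

/-- `S` is a resolving set for `G`: distinct vertices have distinct distance vectors to `S`. -/
def IsResolving {V : Type*} (G : SimpleGraph V) (S : Set V) : Prop :=
  ∀ u v : V, (∀ s ∈ S, G.dist u s = G.dist v s) → u = v

/-- Metric dimension: minimum cardinality of a resolving set. -/
noncomputable def metricDim {V : Type*} [Fintype V] (G : SimpleGraph V) : ℕ :=
  sInf {k | ∃ S : Finset V, S.card = k ∧ IsResolving G (↑S : Set V)}

namespace SimpleGraph

section BoxProd

variable {α β : Type*} {G : SimpleGraph α} {H : SimpleGraph β}

lemma dist_boxProd (hG : G.Preconnected) (hH : H.Preconnected) (x y : α × β) :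
    (G □ H).dist x y = G.dist x.1 y.1 + H.dist x.2 y.2 := by
  rw [dist, edist_boxProd, ENat.toNat_add (edist_ne_top_iff_reachable.mpr (hG _ _))
    (edist_ne_top_iff_reachable.mpr (hH _ _))]
  rfl

end BoxProd

lemma pathGraph_exists_walk_length {n : ℕ} (u v : Fin n) (huv : u ≤ v) :
    ∃ w : (pathGraph n).Walk u v, w.length = (v : ℕ) - u := by
  obtain ⟨k, hk⟩ : ∃ k, (v : ℕ) = u + k := ⟨v - u, by omega⟩
  induction k generalizing u with
  | zero =>
    obtain rfl : u = v := Fin.ext (by omega)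
    exact ⟨.nil, by simp⟩
  | succ k ih =>
    let u' : Fin n := ⟨u + 1, by omega⟩
    obtain ⟨w, hw⟩ := ih u' (Fin.mk_le_mk.mpr (by omega)) (by simp [u']; omega)
    exact ⟨.cons (pathGraph_adj.mpr (.inl rfl)) w, by simp [hw, u']; omega⟩

lemma pathGraph_dist_le_length {n : ℕ} {u v : Fin n} (w : (pathGraph n).Walk u v) :
    Nat.dist u v ≤ w.length := by
  induction w with
  | nil => simp
  | cons h _ ih =>
    rw [pathGraph_adj] at h
    simp only [Walk.length_cons, Nat.dist] at ih ⊢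
    omega

lemma pathGraph_dist {n : ℕ} (u v : Fin n) : (pathGraph n).dist u v = Nat.dist u v := by
  wlog huv : u ≤ v generalizing u v
  · rw [dist_comm, Nat.dist_comm, this v u (le_of_not_ge huv)]
  obtain ⟨w, hw⟩ := (pathGraph_preconnected n u v).exists_walk_length_eq_dist
  obtain ⟨w', hw'⟩ := pathGraph_exists_walk_length u v huv
  refine le_antisymm ?_ (hw ▸ pathGraph_dist_le_length w)
  rw [Nat.dist_eq_sub_of_le huv, ← hw']
  exact dist_le w'

end SimpleGraph

section Corona

variable {V : Type*} {G : SimpleGraph V}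

@[simp]
lemma corona_adj_inl_inl {x y : V} : (corona G).Adj (.inl x) (.inl y) ↔ G.Adj x y := by
  simpa [corona, G.adj_comm y x] using Adj.ne

@[simp]
lemma corona_adj_inl_inr {x y : V} : (corona G).Adj (.inl x) (.inr y) ↔ x = y := by
  simp [corona]

@[simp]
lemma corona_adj_inr_inl {x y : V} : (corona G).Adj (.inr x) (.inl y) ↔ x = y := by
  simp [corona, eq_comm]

@[simp]
lemma corona_adj_inr_inr {x y : V} : ¬ (corona G).Adj (.inr x) (.inr y) := by
  simp [corona]

variable (G) in
def coronaInlHom : G →g corona G where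
  toFun := Sum.inl
  map_rel' := corona_adj_inl_inl.mpr

lemma corona_connected (hG : G.Connected) : (corona G).Connected := by
  have : Nonempty V := hG.nonempty
  have reach_base (c : V ⊕ V) : (corona G).Reachable c (.inl (c.elim id id)) := by
    rcases c with x | x
    · rfl
    · exact (corona_adj_inr_inl.mpr rfl).reachable
  refine .mk fun a b => (reach_base a).trans ?_ |>.trans (reach_base b).symm
  exact (hG.preconnected _ _).map (coronaInlHom G)

lemma dist_elim_le_of_corona_adj {c d : V ⊕ V} (h : (corona G).Adj c d) :
    G.dist (c.elim id id) (d.elim id id) ≤ 1 := by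
  rcases c with x | x <;> rcases d with y | y
  · exact (dist_eq_one_iff_adj.mpr (corona_adj_inl_inl.mp h)).le
  all_goals simp_all

lemma dist_elim_le_length_of_corona_walk (hG : G.Connected) {a b : V ⊕ V}
    (w : (corona G).Walk a b) : G.dist (a.elim id id) (b.elim id id) ≤ w.length := by
  induction w with
  | nil => simp
  | @cons c d e h _ ih =>
    have := hG.dist_triangle (u := c.elim id id) (v := d.elim id id) (w := e.elim id id)
    have := dist_elim_le_of_corona_adj h
    rw [Walk.length_cons]
    omega

lemma corona_dist_inl_inl (hG : G.Connected) (x y : V) :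
    (corona G).dist (.inl x) (.inl y) = G.dist x y := by
  obtain ⟨w, hw⟩ := hG.exists_walk_length_eq_dist x y
  obtain ⟨w', hw'⟩ := (corona_connected hG).exists_walk_length_eq_dist (.inl x) (.inl y)
  refine le_antisymm ?_ (hw' ▸ dist_elim_le_length_of_corona_walk hG w')
  calc (corona G).dist (.inl x) (.inl y) ≤ (w.map (coronaInlHom G)).length := dist_le _
    _ = G.dist x y := by rw [Walk.length_map, hw]

lemma corona_dist_inr_of_ne (hG : G.Connected) {x : V} {s : V ⊕ V} (hs : s ≠ .inr x) :
    (corona G).dist (.inr x) s = (corona G).dist (.inl x) s + 1 := by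
  have hadj : (corona G).Adj (.inr x) (.inl x) := corona_adj_inr_inl.mpr rfl
  refine le_antisymm ?_ ?_
  · have := (corona_connected hG).dist_triangle (u := .inr x) (v := .inl x) (w := s)
    rw [dist_eq_one_iff_adj.mpr hadj] at this
    omega
  obtain ⟨w, hw⟩ := (corona_connected hG).exists_walk_length_eq_dist (.inr x) s
  cases w with
  | nil => exact absurd rfl hs
  | @cons _ c _ h w =>
    obtain rfl : c = .inl x := by
      rcases c with y | y
      · rw [corona_adj_inr_inl.mp h]
      · exact absurd h corona_adj_inr_inr
    rw [← hw, Walk.length_cons]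
    exact Nat.add_le_add_right (dist_le w) 1

lemma corona_dist_inl_inr (hG : G.Connected) (x y : V) :
    (corona G).dist (.inl x) (.inr y) = G.dist x y + 1 := by
  rw [dist_comm, corona_dist_inr_of_ne hG Sum.inl_ne_inr, corona_dist_inl_inl hG, dist_comm]

/-- Base points `a, b` of two landmarks of `G ⊙ K₁` leave a pair of vertices unresolved: either
twins `u ≠ v` of `G` (then `inl u, inl v` are unresolved), or a vertex `v` one step farther than
`u ∉ {a, b}` from both (then the pendant `inr u` and `inl v` are unresolved). -/
def CoronaConfusable (G : SimpleGraph V) (a b : V) : Prop :=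
  (∃ u v, u ≠ v ∧ G.dist u a = G.dist v a ∧ G.dist u b = G.dist v b) ∨
  ∃ u v, u ≠ a ∧ u ≠ b ∧ G.dist v a = G.dist u a + 1 ∧ G.dist v b = G.dist u b + 1

lemma CoronaConfusable.symm {a b : V} (h : CoronaConfusable G a b) : CoronaConfusable G b a := by
  rcases h with ⟨u, v, huv, ha, hb⟩ | ⟨u, v, hua, hub, ha, hb⟩
  · exact .inl ⟨u, v, huv, hb, ha⟩
  · exact .inr ⟨u, v, hub, hua, hb, ha⟩

lemma corona_dist_inl_eq_of_dist_eq (hG : G.Connected) {u v : V} {s : V ⊕ V}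
    (h : G.dist u (s.elim id id) = G.dist v (s.elim id id)) :
    (corona G).dist (.inl u) s = (corona G).dist (.inl v) s := by
  rcases s with a | a
  · simpa [corona_dist_inl_inl hG] using h
  · simpa [corona_dist_inl_inr hG] using h

lemma corona_dist_inr_eq_of_dist_eq_add_one (hG : G.Connected) {u v : V} {s : V ⊕ V}
    (hs : s ≠ .inr u) (h : G.dist v (s.elim id id) = G.dist u (s.elim id id) + 1) :
    (corona G).dist (.inr u) s = (corona G).dist (.inl v) s := by
  rw [corona_dist_inr_of_ne hG hs]
  rcases s with a | a
  · simpa [corona_dist_inl_inl hG] using h.symm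
  · simpa [corona_dist_inl_inr hG] using h.symm

theorem CoronaConfusable.not_isResolving (hG : G.Connected) {s₁ s₂ : V ⊕ V}
    (h : CoronaConfusable G (s₁.elim id id) (s₂.elim id id)) :
    ¬ IsResolving (corona G) {s₁, s₂} := by
  intro hres
  rcases h with ⟨u, v, huv, h₁, h₂⟩ | ⟨u, v, hu₁, hu₂, h₁, h₂⟩
  · refine huv (Sum.inl_injective (hres _ _ ?_))
    rintro s (rfl | rfl)
    · exact corona_dist_inl_eq_of_dist_eq hG h₁
    · exact corona_dist_inl_eq_of_dist_eq hG h₂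
  · refine Sum.inr_ne_inl (hres (.inr u) (.inl v) ?_)
    rintro s (rfl | rfl)
    · exact corona_dist_inr_eq_of_dist_eq_add_one hG (by rintro rfl; exact hu₁ rfl) h₁
    · exact corona_dist_inr_eq_of_dist_eq_add_one hG (by rintro rfl; exact hu₂ rfl) h₂

end Corona

section Grid

variable {n m : ℕ}

lemma grid_dist (u v : Fin n × Fin m) :
    (pathGraph n □ pathGraph m).dist u v = Nat.dist u.1 v.1 + Nat.dist u.2 v.2 := by
  rw [dist_boxProd (pathGraph_preconnected n) (pathGraph_preconnected m), pathGraph_dist,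
    pathGraph_dist]

lemma coronaConfusable_grid_of_fst_eq (hn : 3 ≤ n) {a b : Fin n × Fin m} (hab : a.1 = b.1) :
    CoronaConfusable (pathGraph n □ pathGraph m) a b := by
  obtain ⟨⟨p, hp⟩, ⟨q₁, hq₁⟩⟩ := a
  obtain ⟨⟨_, _⟩, ⟨q₂, hq₂⟩⟩ := b
  obtain rfl : p = _ := congrArg Fin.val hab
  have hm : 0 < m := by omega
  simp only [CoronaConfusable, grid_dist]
  by_cases hp_int : 0 < p ∧ p < n - 1
  · refine .inl ⟨(⟨p - 1, by omega⟩, ⟨0, hm⟩), (⟨p + 1, by omega⟩, ⟨0, hm⟩), ?_, ?_, ?_⟩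
    all_goals simp only [ne_eq, Prod.mk.injEq, Fin.mk.injEq, Nat.dist]; omega
  by_cases hp₀ : p = 0
  · refine .inr ⟨(⟨n - 2, by omega⟩, ⟨0, hm⟩), (⟨n - 1, by omega⟩, ⟨0, hm⟩), ?_, ?_, ?_, ?_⟩
    all_goals simp only [ne_eq, Prod.mk.injEq, Fin.mk.injEq, Nat.dist]; omega
  · refine .inr ⟨(⟨1, by omega⟩, ⟨0, hm⟩), (⟨0, by omega⟩, ⟨0, hm⟩), ?_, ?_, ?_, ?_⟩
    all_goals simp only [ne_eq, Prod.mk.injEq, Fin.mk.injEq, Nat.dist]; omega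

lemma coronaConfusable_grid_of_fst_lt (hn : 3 ≤ n) (hm : 2 ≤ m) {a b : Fin n × Fin m}
    (hab : a.1 < b.1) : CoronaConfusable (pathGraph n □ pathGraph m) a b := by
  obtain ⟨⟨p₁, hp₁⟩, ⟨q₁, hq₁⟩⟩ := a
  obtain ⟨⟨p₂, hp₂⟩, ⟨q₂, hq₂⟩⟩ := b
  rw [Fin.mk_lt_mk] at hab
  simp only [CoronaConfusable, grid_dist]
  -- A step right and a step up or down, towards `b`, preserves both distances.
  rcases lt_trichotomy q₁ q₂ with hq | rfl | hq
  · refine .inl ⟨(⟨p₁, hp₁⟩, ⟨q₁ + 1, by omega⟩), (⟨p₁ + 1, by omega⟩, ⟨q₁, hq₁⟩), ?_, ?_, ?_⟩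
    all_goals simp only [ne_eq, Prod.mk.injEq, Fin.mk.injEq, Nat.dist]; omega
  · obtain ⟨x, hx, hxp⟩ := Finset.exists_mem_notMem_of_card_lt_card (s := {p₁, p₂})
      (t := Finset.range n) (Finset.card_le_two.trans_lt (by simp; omega))
    simp only [Finset.mem_range, Finset.mem_insert, Finset.mem_singleton, not_or] at hx hxp
    by_cases hq : q₁ < m - 1
    · refine .inr ⟨(⟨x, hx⟩, ⟨m - 2, by omega⟩), (⟨x, hx⟩, ⟨m - 1, by omega⟩), ?_, ?_, ?_, ?_⟩
      all_goals simp only [ne_eq, Prod.mk.injEq, Fin.mk.injEq, Nat.dist]; omega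
    · refine .inr ⟨(⟨x, hx⟩, ⟨1, by omega⟩), (⟨x, hx⟩, ⟨0, by omega⟩), ?_, ?_, ?_, ?_⟩
      all_goals simp only [ne_eq, Prod.mk.injEq, Fin.mk.injEq, Nat.dist]; omega
  · refine .inl ⟨(⟨p₁, hp₁⟩, ⟨q₁ - 1, by omega⟩), (⟨p₁ + 1, by omega⟩, ⟨q₁, hq₁⟩), ?_, ?_, ?_⟩
    all_goals simp only [ne_eq, Prod.mk.injEq, Fin.mk.injEq, Nat.dist]; omega

theorem coronaConfusable_grid (hn : 3 ≤ n) (hm : 2 ≤ m) (a b : Fin n × Fin m) :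
    CoronaConfusable (pathGraph n □ pathGraph m) a b := by
  rcases lt_trichotomy a.1 b.1 with hab | hab | hab
  · exact coronaConfusable_grid_of_fst_lt hn hm hab
  · exact coronaConfusable_grid_of_fst_eq hn hab
  · exact (coronaConfusable_grid_of_fst_lt hn hm hab).symm

end Grid

section MetricDim

variable {V : Type*} {G : SimpleGraph V}

lemma IsResolving.mono {S T : Set V} (hS : IsResolving G S) (hST : S ⊆ T) : IsResolving G T :=
  fun u v h => hS u v fun s hs => h s (hST hs)

lemma isResolving_univ (hG : G.Preconnected) : IsResolving G Set.univ := fun u v h => by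
  have := h u trivial
  rw [dist_self, eq_comm, (hG v u).dist_eq_zero_iff] at this
  exact this.symm

lemma lt_metricDim_of_forall_card_eq [Fintype V] (hG : G.Preconnected) {k : ℕ}
    (hk : k ≤ Fintype.card V) (h : ∀ S : Finset V, S.card = k → ¬ IsResolving G S) :
    k < metricDim G := by
  refine Nat.lt_of_succ_le (le_csInf ⟨_, Finset.univ, rfl, by simpa using isResolving_univ hG⟩ ?_)
  rintro j ⟨S, rfl, hS⟩
  by_contra! hSk
  obtain ⟨T, hST, -, hT⟩ :=
    Finset.exists_subsuperset_card_eq (Finset.subset_univ S) (Nat.le_of_lt_succ hSk) hk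
  exact h T hT (hS.mono (Finset.coe_subset.mpr hST))

end MetricDim

lemma grid_connected {n m : ℕ} (hn : 0 < n) (hm : 0 < m) :
    (pathGraph n □ pathGraph m).Connected :=
  have : Nonempty (Fin n × Fin m) := ⟨(⟨0, hn⟩, ⟨0, hm⟩)⟩
  ⟨(pathGraph_preconnected n).boxProd (pathGraph_preconnected m)⟩

theorem stmt_3 (n m : ℕ) (hn : 3 ≤ n) (hm : 2 ≤ m) :
    (∀ S : Finset ((Fin n × Fin m) ⊕ (Fin n × Fin m)), S.card = 2 →
      ¬ IsResolving (corona (pathGraph n □ pathGraph m)) (↑S)) ∧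
    3 ≤ metricDim (corona (pathGraph n □ pathGraph m)) := by
  have hG := grid_connected (n := n) (m := m) (by omega) (by omega)
  have no_pair : ∀ S : Finset ((Fin n × Fin m) ⊕ (Fin n × Fin m)), S.card = 2 →
      ¬ IsResolving (corona (pathGraph n □ pathGraph m)) (↑S) := by
    intro S hS
    obtain ⟨s₁, s₂, -, rfl⟩ := Finset.card_eq_two.mp hS
    rw [Finset.coe_pair]
    exact (coronaConfusable_grid hn hm _ _).not_isResolving hG
  refine ⟨no_pair, lt_metricDim_of_forall_card_eq (corona_connected hG).preconnected ?_ no_pair⟩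
  simp only [Fintype.card_sum, Fintype.card_prod, Fintype.card_fin]
  nlinarith
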